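/- arXiv:2403.04779 — 3 statements merged into one kernel-verified Lean document; each statement's English description precedes it below -/
import Mathlib

section
/- Under the uniform prior over the N+1 hypotheses on the urn's composition, if a sample of n balls drawn without replacement from the urn of N balls contains exactly k black balls, then the posterior probability of hypothesis H_i (that the urn initially contained i black balls) equals C(i, k)·C(N−i, n−k) / C(N+1, n+1). -/
/-!
With a uniform prior the posterior is the likelihood normalised by the evidence
`∑ j, C(j, k) C(N - j, n - k)`, and this sum is `C(N + 1, n + 1)` by the upper Chu–Vandermonde
identity: an `(n + 1)`-subset of `{0, …, N}` is determined by its `(k + 1)`-st smallest element `j`,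
a `k`-subset below it and an `(n - k)`-subset above it.
-/

open Finset

theorem Nat.sum_antidiagonal_choose_mul_choose (k m N : ℕ) :
    ∑ p ∈ antidiagonal N, p.1.choose k * p.2.choose m = (N + 1).choose (k + m + 1) := by
  induction N generalizing k with
  | zero => cases k <;> cases m <;> simp [Nat.choose_eq_zero_of_lt]
  | succ N ih =>
    rw [Nat.sum_antidiagonal_succ]
    cases k with
    | zero =>
      have h0 := ih 0
      simp only [Nat.choose_zero_right, one_mul, zero_add] at h0 ⊢
      rw [h0, ← Nat.choose_succ_succ]
    | succ k =>
      have pascal : ∀ p : ℕ × ℕ, (p.1 + 1).choose (k + 1) * p.2.choose m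
          = p.1.choose k * p.2.choose m + p.1.choose (k + 1) * p.2.choose m :=
        fun p => by rw [Nat.choose_succ_succ', add_mul]
      rw [Nat.choose_zero_succ, zero_mul, zero_add, sum_congr rfl fun p _ => pascal p,
        sum_add_distrib, ih, ih, show k + 1 + m + 1 = k + m + 1 + 1 by omega,
        ← Nat.choose_succ_succ']

theorem Nat.sum_range_choose_mul_choose_sub (k m N : ℕ) :
    ∑ j ∈ range (N + 1), j.choose k * (N - j).choose m = (N + 1).choose (k + m + 1) := by
  rw [← Nat.sum_antidiagonal_choose_mul_choose,
    Nat.sum_antidiagonal_eq_sum_range_succ_mk]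

theorem posterior_urn_general (N n k i : ℕ) (hk : k ≤ n) (hn : n ≤ N) :
    ((i.choose k * (N - i).choose (n - k) : ℝ) / (N.choose n) * (1 / ((N : ℝ) + 1))) /
      (∑ j ∈ Finset.range (N + 1),
        (j.choose k * (N - j).choose (n - k) : ℝ) / (N.choose n) * (1 / ((N : ℝ) + 1)))
    = (i.choose k * (N - i).choose (n - k) : ℝ) / ((N + 1).choose (n + 1)) := by
  have hprior : 1 / ((N : ℝ) + 1) ≠ 0 := by positivity
  have hD : (N.choose n : ℝ) ≠ 0 := by exact_mod_cast (Nat.choose_pos hn).ne'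
  have hevidence : ∑ j ∈ range (N + 1), (j.choose k * (N - j).choose (n - k) : ℝ)
      = (N + 1).choose (n + 1) := by
    have h := Nat.sum_range_choose_mul_choose_sub k (n - k) N
    rw [Nat.add_sub_cancel' hk] at h
    exact_mod_cast h
  rw [← sum_mul, mul_div_mul_right _ _ hprior, ← sum_div, div_div_div_cancel_right₀ hD, hevidence]

theorem posterior_urn (N n k i : ℕ) (hk : k ≤ n) (hn : n ≤ N) (hi : i ≤ N) :
    ((i.choose k * (N - i).choose (n - k) : ℝ) / (N.choose n) * (1 / ((N : ℝ) + 1))) /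
      (∑ j ∈ Finset.range (N + 1),
        (j.choose k * (N - j).choose (n - k) : ℝ) / (N.choose n) * (1 / ((N : ℝ) + 1)))
    = (i.choose k * (N - i).choose (n - k) : ℝ) / ((N + 1).choose (n + 1)) :=
  posterior_urn_general N n k i hk hn
end

section
/- If the posterior over the urn composition after observing k black balls in n draws is Pr[H_i] = C(i,k)·C(N−i,n−k)/C(N+1,n+1), and given H_i the probability that the next ball drawn (without replacement) is black is (i−k)/(N−n), then the total probability that the next ball is black equals (k+1)/(n+2). -/
/-!
Absorption, `(i - k) C(i, k) = (k + 1) C(i, k + 1)`, turns the sum into `(k + 1)/(N - n)` times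
`∑ᵢ C(i, k + 1) C(N - i, n - k) / C(N + 1, n + 1)`. By the upper Chu–Vandermonde identity
`∑ᵢ C(i, a) C(N - i, b) = C(N + 1, a + b + 1)` (choose `a + b + 1` elements of `{0, …, N}` and split
at the `(a + 1)`-st one) the numerator is `C(N + 1, n + 2)`, and
`C(N + 1, n + 2)/C(N + 1, n + 1) = (N - n)/(n + 2)`.
-/

open Finset

namespace Nat

theorem sum_antidiagonal_choose_mul_choose_s5 (a : ℕ) :
    ∀ N b : ℕ, ∑ ij ∈ antidiagonal N, ij.1.choose a * ij.2.choose b = (N + 1).choose (a + b + 1)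
  | 0, b => by rcases a with _ | a <;> rcases b with _ | b <;> simp [choose_eq_zero_of_lt]
  | N + 1, 0 => by
    have ih := sum_antidiagonal_choose_mul_choose_s5 a N 0
    simp only [choose_zero_right, mul_one, add_zero] at ih ⊢
    rw [Finset.Nat.sum_antidiagonal_succ', ih, choose_succ_succ' (N + 1) a, add_comm]
  | N + 1, b + 1 => by
    have ih := sum_antidiagonal_choose_mul_choose_s5 a N
    have hsplit : ∀ ij : ℕ × ℕ, ij.1.choose a * (ij.2 + 1).choose (b + 1)
        = ij.1.choose a * ij.2.choose b + ij.1.choose a * ij.2.choose (b + 1) := fun ij ↦ by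
      rw [choose_succ_succ', mul_add]
    rw [Finset.Nat.sum_antidiagonal_succ', choose_zero_succ, mul_zero, zero_add]
    simp only [hsplit, sum_add_distrib, ih]
    rw [← add_assoc, choose_succ_succ' (N + 1)]

theorem sum_range_choose_mul_choose_sub_s5 (a b N : ℕ) :
    ∑ i ∈ range (N + 1), i.choose a * (N - i).choose b = (N + 1).choose (a + b + 1) := by
  rw [← Finset.Nat.sum_antidiagonal_eq_sum_range_succ (fun i j ↦ i.choose a * j.choose b),
    sum_antidiagonal_choose_mul_choose_s5]

theorem cast_sub_mul_choose {R : Type*} [CommRing R] (i k : ℕ) :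
    ((i : R) - k) * i.choose k = (k + 1) * i.choose (k + 1) := by
  rcases lt_or_ge i k with hik | hki
  · simp [choose_eq_zero_of_lt hik, choose_eq_zero_of_lt (hik.trans k.lt_succ_self)]
  · have h := congrArg (Nat.cast : ℕ → R) (choose_succ_right_eq i k)
    push_cast [cast_sub hki] at h
    linear_combination -h

end Nat

theorem laplace_succession (N n k : ℕ) (hk : k ≤ n) (hn : n < N) :
    ∑ i ∈ Finset.range (N + 1),
        (((i : ℝ) - k) / ((N : ℝ) - n)) *
          ((i.choose k * (N - i).choose (n - k) : ℝ) / ((N + 1).choose (n + 1)))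
      = ((k : ℝ) + 1) / ((n : ℝ) + 2) := by
  have hNn : (0 : ℝ) < N - n := sub_pos.mpr (by exact_mod_cast hn)
  have hC : (0 : ℝ) < (N + 1).choose (n + 1) := by exact_mod_cast Nat.choose_pos (by omega)
  have hsum : ∑ i ∈ range (N + 1), ((i : ℝ) - k) * (i.choose k * (N - i).choose (n - k))
      = (k + 1) * (N + 1).choose (n + 2) := by
    have h := Nat.sum_range_choose_mul_choose_sub_s5 (k + 1) (n - k) N
    rw [show k + 1 + (n - k) + 1 = n + 2 by omega] at h
    simp_rw [← mul_assoc, Nat.cast_sub_mul_choose, mul_assoc, ← mul_sum]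
    rw [← h]
    norm_cast
  have hratio : ((N + 1).choose (n + 2) : ℝ) * (n + 2) = (N + 1).choose (n + 1) * (N - n) := by
    have h := Nat.choose_succ_right_eq (N + 1) (n + 1)
    rw [show N + 1 - (n + 1) = N - n by omega] at h
    rw [← Nat.cast_sub hn.le]
    exact_mod_cast h
  simp_rw [div_mul_div_comm, ← sum_div, hsum]
  rw [div_eq_div_iff (by positivity) (by positivity)]
  linear_combination ((k : ℝ) + 1) * hratio
end

section
/- For non-negative integers k ≤ n and m ≥ 0: Σ_{r=0}^{m} (k+r+1)·C(k+r, k)·C(n−k+m−r, n−k) = (k+1)·C(n+m+2, n+2). -/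
/-!
Since `(k + r + 1) * C(k + r, k) = (k + 1) * C(k + r + 1, k + 1)`, the sum is `k + 1` times
`∑ C(a + i, a) * C(b + j, b)` over `i + j = m`, with `a = k + 1`, `b = n - k`. Upper negation,
`C(a + i, a) = (-1)^i * C(-(a + 1), i)` in `ℤ`, turns this into the Chu–Vandermonde identity
for `C(-(a + 1) - (b + 1), m)`, i.e. the sum is `C(a + b + 1 + m, a + b + 1)`.
-/

open Finset

theorem Ring.choose_neg_natCast_add_one (a i : ℕ) :
    Ring.choose (-((a : ℤ) + 1)) i = (-1) ^ i * ((a + i).choose a : ℤ) := by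
  rw [Ring.choose_neg, Units.smul_def, Int.coe_negOnePow_natCast,
    show (a : ℤ) + 1 + i - 1 = ((a + i : ℕ) : ℤ) by push_cast; ring, Ring.choose_natCast,
    Nat.choose_symm_add, smul_eq_mul]

theorem Nat.sum_antidiagonal_add_choose_mul_add_choose (a b m : ℕ) :
    ∑ ij ∈ antidiagonal m, (a + ij.1).choose a * (b + ij.2).choose b
      = (a + b + 1 + m).choose (a + b + 1) := by
  have h : (-1 : ℤ) ^ m * ((a + b + 1 + m).choose (a + b + 1) : ℤ)
      = (-1) ^ m * ((∑ ij ∈ antidiagonal m, (a + ij.1).choose a * (b + ij.2).choose b : ℕ) : ℤ) :=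
    calc _ = Ring.choose (-(((a + b + 1 : ℕ) : ℤ) + 1)) m :=
          (Ring.choose_neg_natCast_add_one _ _).symm
      _ = Ring.choose (-((a : ℤ) + 1) + -((b : ℤ) + 1)) m := by push_cast; ring_nf
      _ = ∑ ij ∈ antidiagonal m,
            Ring.choose (-((a : ℤ) + 1)) ij.1 * Ring.choose (-((b : ℤ) + 1)) ij.2 :=
          Ring.add_choose_eq m (Commute.all _ _)
      _ = _ := by
        push_cast
        rw [mul_sum]
        refine sum_congr rfl fun ij hij => ?_
        rw [Ring.choose_neg_natCast_add_one, Ring.choose_neg_natCast_add_one,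
          ← mem_antidiagonal.1 hij, pow_add]
        ring
  exact_mod_cast (mul_right_injective₀ (pow_ne_zero m (by norm_num)) h).symm

theorem beta_binomial_moment_sum (n k m : ℕ) (hk : k ≤ n) :
    ∑ r ∈ Finset.range (m + 1),
        (k + r + 1) * (k + r).choose k * (n - k + (m - r)).choose (n - k)
      = (k + 1) * (n + m + 2).choose (n + 2) := by
  calc _ = ∑ r ∈ range (m + 1),
          (k + 1) * ((k + 1 + r).choose (k + 1) * (n - k + (m - r)).choose (n - k)) := by
        refine sum_congr rfl fun r _ => ?_
        rw [Nat.add_one_mul_choose_eq, add_right_comm k 1 r]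
        ring
    _ = (k + 1) * ∑ ij ∈ antidiagonal m,
          (k + 1 + ij.1).choose (k + 1) * (n - k + ij.2).choose (n - k) := by
        rw [Nat.sum_antidiagonal_eq_sum_range_succ
          (fun i j => (k + 1 + i).choose (k + 1) * (n - k + j).choose (n - k)), mul_sum]
    _ = _ := by
        rw [Nat.sum_antidiagonal_add_choose_mul_add_choose,
          show k + 1 + (n - k) + 1 = n + 2 by omega, show n + 2 + m = n + m + 2 by omega]
end
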